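/- Let d ≥ 1, n ≥ 1, and g₁,…,gₙ ∈ ℝ with g_j < 0 for every j. Let A ∈ ℂ with A ≠ 0, ω ∈ ℝ and k ∈ ℝ^d, and let φ(t,x) = A·exp(i(ωt − k·x)) be the plane wave. Then φ satisfies (□_{g₁} ∘ ⋯ ∘ □_{gₙ})φ = 0 identically on ℝ × ℝ^d if and only if there exists j ∈ {1,…,n} such that ω = ‖k‖/√(−g_j) or ω = −‖k‖/√(−g_j). In particular the solutions are massless plane waves propagating with the n speeds 1/√(−g_j). -/

import Mathlib

/-!
Along every line in space-time a plane wave is an exponential `u ↦ A e^{cu+b}`, so each second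
derivative multiplies it by `c²`. Hence `□_g` acts on the plane wave as multiplication by its
symbol `-(g ω² + ‖k‖²)`, and the composite operator as multiplication by the product of the
symbols. With `A ≠ 0` the plane wave is a solution iff one symbol vanishes, and for `g < 0` the
symbol vanishes iff `ω = ±‖k‖/√(-g)`.
-/

/-- Second time derivative: `(∂²φ/∂t²)(t,x)`. -/
noncomputable def dtt (d : ℕ) (φ : ℝ × EuclideanSpace ℝ (Fin d) → ℂ) :
    ℝ × EuclideanSpace ℝ (Fin d) → ℂ :=
  fun p => deriv (deriv (fun u : ℝ => φ (u, p.2))) p.1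

/-- Spatial Laplacian: `Σ_a (∂²φ/∂x_a²)(t,x)`, computed as second directional
derivatives along the coordinate directions. -/
noncomputable def lap (d : ℕ) (φ : ℝ × EuclideanSpace ℝ (Fin d) → ℂ) :
    ℝ × EuclideanSpace ℝ (Fin d) → ℂ :=
  fun p => ∑ a : Fin d,
    deriv (deriv (fun u : ℝ => φ (p.1, p.2 + u • EuclideanSpace.single a (1 : ℝ)))) 0

/-- The Carrollian operator `□_g φ = g ∂²φ/∂t² + Δφ`. -/
noncomputable def carrollBox (d : ℕ) (g : ℝ) (φ : ℝ × EuclideanSpace ℝ (Fin d) → ℂ) :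
    ℝ × EuclideanSpace ℝ (Fin d) → ℂ :=
  fun p => (g : ℂ) * dtt d φ p + lap d φ p

/-- The plane wave `φ(t,x) = A·exp(i(ωt − k·x))`. -/
noncomputable def planeWave (d : ℕ) (A : ℂ) (ω : ℝ) (k : EuclideanSpace ℝ (Fin d)) :
    ℝ × EuclideanSpace ℝ (Fin d) → ℂ :=
  fun p => A * Complex.exp (Complex.I * (((ω * p.1 : ℝ) : ℂ) - ((inner ℝ k p.2 : ℝ) : ℂ)))

open Complex

section ExpAffine

variable (A c b : ℂ)

theorem deriv_const_mul_cexp_affine :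
    deriv (fun u : ℝ => A * cexp (c * u + b)) = fun u : ℝ => (c * A) * cexp (c * u + b) := by
  funext u
  have hline : HasDerivAt (fun u : ℝ => c * (u : ℂ) + b) c u := by
    simpa using (ofRealCLM.hasDerivAt (x := u)).const_mul c |>.add_const b
  rw [(hline.cexp.const_mul A).deriv]
  ring

theorem deriv_deriv_const_mul_cexp_affine (u : ℝ) :
    deriv (deriv fun u : ℝ => A * cexp (c * u + b)) u = c ^ 2 * (A * cexp (c * u + b)) := by
  rw [deriv_const_mul_cexp_affine, deriv_const_mul_cexp_affine]
  ring

end ExpAffine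

section PlaneWave

variable {d : ℕ} (A : ℂ) (ω : ℝ) (k : EuclideanSpace ℝ (Fin d))

noncomputable def carrollSymbol (g : ℝ) : ℝ := -(g * ω ^ 2 + ‖k‖ ^ 2)

theorem planeWave_const_mul (c : ℂ) (p : ℝ × EuclideanSpace ℝ (Fin d)) :
    planeWave d (c * A) ω k p = c * planeWave d A ω k p :=
  mul_assoc _ _ _

theorem dtt_planeWave (p : ℝ × EuclideanSpace ℝ (Fin d)) :
    dtt d (planeWave d A ω k) p = -((ω ^ 2 : ℝ) : ℂ) * planeWave d A ω k p := by
  have htime : (fun u : ℝ => planeWave d A ω k (u, p.2))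
      = fun u : ℝ => A * cexp ((I * ω) * u + -(I * (inner ℝ k p.2 : ℝ))) := by
    funext u
    simp only [planeWave]
    push_cast
    ring_nf
  rw [dtt, htime, deriv_deriv_const_mul_cexp_affine, planeWave]
  push_cast
  ring_nf
  simp only [I_sq]
  ring

theorem lap_planeWave (p : ℝ × EuclideanSpace ℝ (Fin d)) :
    lap d (planeWave d A ω k) p = -((‖k‖ ^ 2 : ℝ) : ℂ) * planeWave d A ω k p := by
  have hterm (a : Fin d) :
      deriv (deriv fun u : ℝ => planeWave d A ω k (p.1, p.2 + u • EuclideanSpace.single a 1)) 0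
        = -((k a ^ 2 : ℝ) : ℂ) * planeWave d A ω k p := by
    have hline : (fun u : ℝ => planeWave d A ω k (p.1, p.2 + u • EuclideanSpace.single a 1))
        = fun u : ℝ => A * cexp (-(I * k a) * u + I * ((ω * p.1 : ℝ) - (inner ℝ k p.2 : ℝ))) := by
      funext u
      simp only [planeWave, inner_add_right, real_inner_smul_right,
        EuclideanSpace.inner_single_right, conj_trivial, one_mul]
      push_cast
      ring_nf
    rw [hline, deriv_deriv_const_mul_cexp_affine, planeWave]
    push_cast
    ring_nf
    simp only [I_sq]
    ring
  rw [lap, Finset.sum_congr rfl fun a _ => hterm a, ← Finset.sum_mul,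
    EuclideanSpace.real_norm_sq_eq]
  push_cast
  rw [Finset.sum_neg_distrib]

theorem carrollBox_planeWave (g : ℝ) :
    carrollBox d g (planeWave d A ω k) = planeWave d (carrollSymbol ω k g * A) ω k := by
  funext p
  rw [carrollBox, dtt_planeWave, lap_planeWave, planeWave_const_mul, carrollSymbol]
  push_cast
  ring

theorem foldr_carrollBox_planeWave (L : List ℝ) :
    L.foldr (carrollBox d) (planeWave d A ω k)
      = planeWave d ((L.map (carrollSymbol ω k)).prod * A) ω k := by
  induction L with
  | nil => simp
  | cons g L ih =>
    rw [List.foldr_cons, ih, carrollBox_planeWave, List.map_cons, List.prod_cons]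
    push_cast
    rw [mul_assoc]

theorem planeWave_eq_zero_iff :
    (∀ p : ℝ × EuclideanSpace ℝ (Fin d), planeWave d A ω k p = 0) ↔ A = 0 := by
  refine ⟨fun h => ?_, fun hA p => by rw [planeWave, hA, zero_mul]⟩
  simpa [planeWave, exp_ne_zero] using h 0

theorem carrollSymbol_eq_zero_iff {g : ℝ} (hg : g < 0) :
    carrollSymbol ω k g = 0 ↔ ω = ‖k‖ / √(-g) ∨ ω = -(‖k‖ / √(-g)) := by
  have hg' : 0 < -g := neg_pos.mpr hg
  rw [← sq_eq_sq_iff_eq_or_eq_neg, div_pow, Real.sq_sqrt hg'.le, eq_div_iff hg'.ne',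
    carrollSymbol]
  constructor <;> intro h <;> linarith

end PlaneWave

theorem planeWave_solves_iff_dispersion_general (d : ℕ) (n : ℕ)
    (g : Fin n → ℝ) (hneg : ∀ j, g j < 0) (A : ℂ) (hA : A ≠ 0) (ω : ℝ)
    (k : EuclideanSpace ℝ (Fin d)) :
    (∀ p : ℝ × EuclideanSpace ℝ (Fin d),
        (List.ofFn g).foldr (carrollBox d) (planeWave d A ω k) p = 0)
      ↔ ∃ j : Fin n, ω = ‖k‖ / Real.sqrt (-(g j)) ∨ ω = -(‖k‖ / Real.sqrt (-(g j))) := by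
  rw [foldr_carrollBox_planeWave, planeWave_eq_zero_iff, mul_eq_zero, or_iff_left hA,
    ofReal_eq_zero, List.map_ofFn, List.prod_ofFn, Finset.prod_eq_zero_iff]
  simp only [Finset.mem_univ, true_and, Function.comp_apply]
  exact exists_congr fun j => carrollSymbol_eq_zero_iff ω k (hneg j)

/-- with all couplings negative, a plane wave with nonzero amplitude
solves `(□_{g₁} ∘ ⋯ ∘ □_{gₙ})φ = 0` iff its frequency obeys one of the `n`
dispersion relations `ω = ±‖k‖/√(−g_j)`; the solutions are massless plane waves
propagating with the speeds `1/√(−g_j)`. -/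
theorem planeWave_solves_iff_dispersion (d : ℕ) (hd : 1 ≤ d) (n : ℕ) (hn : 1 ≤ n)
    (g : Fin n → ℝ) (hneg : ∀ j, g j < 0) (A : ℂ) (hA : A ≠ 0) (ω : ℝ)
    (k : EuclideanSpace ℝ (Fin d)) :
    (∀ p : ℝ × EuclideanSpace ℝ (Fin d),
        (List.ofFn g).foldr (carrollBox d) (planeWave d A ω k) p = 0)
      ↔ ∃ j : Fin n, ω = ‖k‖ / Real.sqrt (-(g j)) ∨ ω = -(‖k‖ / Real.sqrt (-(g j))) :=
  planeWave_solves_iff_dispersion_general d n g hneg A hA ω k
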